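/- arXiv:2305.08955 — 2 statements merged into one kernel-verified Lean document; each statement's English description precedes it below -/
import Mathlib

section
/- Let p be an odd prime (p ≠ 2), let K = ℚ(ζ_p) be the p-th cyclotomic field, let R be its ring of integers, and let ζ be a primitive p-th root of unity in R. Then every unit u of R can be written as u = x * ζ^n for some unit x of R and some integer n ∈ ℤ, where the image of x in K is fixed by complex conjugation (i.e., by the automorphism of K over ℚ sending ζ to ζ⁻¹). -/
/-!
Complex conjugation `c` is an automorphism of the CM field `K = ℚ(ζ)`, and `u * (c u)⁻¹` has
absolute value `1` at every complex embedding, so it is a root of unity, i.e. `(-ζ) ^ r`.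
Since `𝓞 K = ℤ[ζ]` and `c ζ = ζ⁻¹ ≡ ζ` modulo the prime `ζ - 1`, `c` acts trivially on
`𝓞 K ⧸ (ζ - 1)`; an odd `r` would then give `u ≡ -u`, i.e. `2 ∈ (ζ - 1)`, which fails for
`p ≠ 2`. So `u * (c u)⁻¹ = ζ ^ (2 * k)`, and `x = u * ζ ^ (-k)` is fixed by `c`, which is the
only automorphism sending `ζ` to `ζ⁻¹`.
-/

open NumberField IsCMField

theorem MonoidHom.map_mul_zpow_neg_eq_self {G : Type*} [CommGroup G] (c : G →* G) {η u : G}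
    (hη : c η = η⁻¹) {k : ℤ} (hu : u * (c u)⁻¹ = η ^ (2 * k)) :
    c (u * η ^ (-k)) = u * η ^ (-k) := by
  have hcu : c u = η ^ (-(2 * k)) * u := by rw [zpow_neg, ← hu]; group
  rw [map_mul, map_zpow, hη, hcu, inv_zpow', neg_neg, mul_right_comm, ← zpow_add, mul_comm]
  congr 2
  ring

theorem Ideal.Quotient.mk_span_sub_one_self {R : Type*} [CommRing R] (x : R) :
    mk (span {x - 1}) x = 1 := by
  rw [← sub_eq_zero, ← map_one (mk _), ← map_sub, mk_singleton_self]

theorem Ideal.Quotient.mk_span_sub_one_comp_eq {R : Type*} [CommRing R] {ζ : R}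
    (hζ : Algebra.adjoin ℤ {ζ} = ⊤) {σ : R →+* R} (hσ : σ ζ * ζ = 1) :
    (mk (span {ζ - 1})).comp σ = mk (span {ζ - 1}) := by
  refine RingHom.toIntAlgHom_injective <| AlgHom.ext_of_adjoin_eq_top hζ fun x hx ↦ ?_
  rw [Set.mem_singleton_iff.mp hx]
  change mk _ (σ ζ) = mk _ ζ
  calc mk _ (σ ζ) = mk _ (σ ζ) * mk _ ζ := by rw [mk_span_sub_one_self, mul_one]
    _ = mk _ ζ := by rw [← map_mul, hσ, map_one, mk_span_sub_one_self]

theorem Ideal.two_mem_of_eq_neg_mul_map {R : Type*} [CommRing R] {I : Ideal R} {σ : R →+* R}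
    (hσ : (Ideal.Quotient.mk I).comp σ = Ideal.Quotient.mk I) {u t : R} (hu : IsUnit u)
    (ht : Ideal.Quotient.mk I t = 1) (h : u = -t * σ u) : (2 : R) ∈ I := by
  have hmod : Ideal.Quotient.mk I u = -Ideal.Quotient.mk I u := by
    conv_lhs => rw [h]
    rw [map_mul, map_neg, ht, ← RingHom.comp_apply, hσ, neg_one_mul]
  rw [← Ideal.Quotient.eq_zero_iff_mem]
  refine (hu.map (Ideal.Quotient.mk I)).mul_left_eq_zero.mp ?_
  rw [map_ofNat, two_mul]
  nth_rewrite 2 [hmod]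
  exact add_neg_cancel _

section

variable {K : Type*} [Field K] [NumberField K]

theorem IsPrimitiveRoot.exists_units_eq_neg_pow_of_isOfFinOrder {n : ℕ}
    [IsCyclotomicExtension {n} ℚ K] (hno : Odd n) {ζ : 𝓞 K} (hζ : IsPrimitiveRoot ζ n)
    {t : (𝓞 K)ˣ} (ht : IsOfFinOrder t) : ∃ r : ℕ, t = (-(hζ.isUnit hno.pos.ne').unit) ^ r := by
  have : NeZero n := ⟨hno.pos.ne'⟩
  obtain ⟨r, hr⟩ :=
    (hζ.map_of_injective RingOfIntegers.coe_injective).exists_neg_pow_of_isOfFinOrder hno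
      (((algebraMap (𝓞 K) K : 𝓞 K →* K).comp (Units.coeHom _)).isOfFinOrder ht)
  exact ⟨r, Units.ext <| RingOfIntegers.coe_injective (by simpa using hr)⟩

variable [IsCMField K]

theorem IsPrimitiveRoot.unitsComplexConj_unit {n : ℕ} (hn : n ≠ 0) {ζ : 𝓞 K}
    (hζ : IsPrimitiveRoot ζ n) :
    unitsComplexConj K (hζ.isUnit hn).unit = (hζ.isUnit hn).unit⁻¹ :=
  unitsComplexConj_torsion K
    ⟨_, (CommGroup.mem_torsion _).mpr ((hζ.isUnit_unit hn).isOfFinOrder hn)⟩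

theorem IsPrimitiveRoot.algEquiv_eq_complexConj {n : ℕ} [NeZero n]
    [IsCyclotomicExtension {n} ℚ K] {ζ : 𝓞 K} (hζ : IsPrimitiveRoot ζ n) {σ : K ≃ₐ[ℚ] K}
    (hσ : σ ζ = (ζ : K)⁻¹) : σ = (complexConj K).restrictScalars ℚ := by
  have hconj := congrArg (fun u : (𝓞 K)ˣ ↦ ((u : 𝓞 K) : K))
    (hζ.unitsComplexConj_unit (NeZero.ne n))
  simp only [Units.coe_mapEquiv, RingEquiv.coe_toMulEquiv, RingOfIntegers.mapRingEquiv_apply,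
    AlgEquiv.coe_ringEquiv, IsUnit.unit_spec] at hconj
  apply AlgEquiv.coe_toAlgHom_injective
  apply ((hζ.map_of_injective RingOfIntegers.coe_injective).powerBasis ℚ).algHom_ext
  simp [hσ, hconj]

theorem IsPrimitiveRoot.even_of_mul_inv_unitsComplexConj_eq_neg_pow {p : ℕ} [Fact p.Prime]
    [IsCyclotomicExtension {p} ℚ K] (hp2 : 2 < p) {ζ : 𝓞 K} (hζ : IsPrimitiveRoot ζ p)
    {u : (𝓞 K)ˣ} {r : ℕ}
    (hr : u * (unitsComplexConj K u)⁻¹ = (-(hζ.isUnit (NeZero.ne p)).unit) ^ r) : Even r := by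
  refine Nat.not_odd_iff_even.mp fun hro ↦
    IsCyclotomicExtension.Rat.two_not_mem_span_zeta_sub_one' p
      (hζ.map_of_injective RingOfIntegers.coe_injective) hp2 ?_
  change (2 : 𝓞 K) ∈ Ideal.span {ζ - 1}
  have hu : (u : 𝓞 K) = -ζ ^ r * (ringOfIntegersComplexConj K : 𝓞 K →+* 𝓞 K) u := by
    rw [hro.neg_pow, mul_inv_eq_iff_eq_mul] at hr
    have hval := congrArg Units.val hr
    push_cast at hval
    rwa [IsUnit.unit_spec] at hval
  have hconj : ringOfIntegersComplexConj K ζ * ζ = 1 := by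
    have := congrArg Units.val (hζ.unitsComplexConj_unit (NeZero.ne p))
    rw [← Units.inv_mul (hζ.isUnit (NeZero.ne p)).unit, ← this]
    rfl
  refine Ideal.two_mem_of_eq_neg_mul_map (Ideal.Quotient.mk_span_sub_one_comp_eq
    (IsCyclotomicExtension.adjoin_primitive_root_eq_top hζ) hconj) u.isUnit ?_ hu
  rw [map_pow, Ideal.Quotient.mk_span_sub_one_self, one_pow]

theorem IsPrimitiveRoot.exists_mul_inv_unitsComplexConj_eq_zpow {p : ℕ} [Fact p.Prime]
    [IsCyclotomicExtension {p} ℚ K] (hp2 : 2 < p) {ζ : 𝓞 K} (hζ : IsPrimitiveRoot ζ p)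
    (u : (𝓞 K)ˣ) :
    ∃ k : ℤ, u * (unitsComplexConj K u)⁻¹ = (hζ.isUnit (NeZero.ne p)).unit ^ (2 * k) := by
  obtain ⟨r, hr⟩ := hζ.exists_units_eq_neg_pow_of_isOfFinOrder
    (Fact.out (p := p.Prime) |>.odd_of_ne_two hp2.ne')
    ((CommGroup.mem_torsion _).mp (unitsMulComplexConjInv K u).prop)
  rw [unitsMulComplexConjInv_apply] at hr
  obtain ⟨k, rfl⟩ := hζ.even_of_mul_inv_unitsComplexConj_eq_neg_pow hp2 hr
  refine ⟨k, ?_⟩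
  rw [hr, Even.neg_pow ⟨k, rfl⟩, ← two_mul, ← zpow_natCast, Nat.cast_mul, Nat.cast_two]

end

/-- If `p ≠ 2` is a prime, `K = ℚ(ζ_p)` with ring of integers `R` and `ζ ∈ R` a primitive
`p`-th root of unity, then every unit `u` of `R` is of the form `u = x * ζ ^ n` with `n ∈ ℤ`
and `x` a unit of `R` whose image in `K` is fixed by complex conjugation, i.e. by any
automorphism of `K` over `ℚ` sending `ζ` to `ζ⁻¹`. -/
theorem unit_lemma_gal_conj {p : ℕ} [hp : Fact p.Prime] (hodd : p ≠ 2)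
    {K : Type*} [Field K] [CharZero K] [IsCyclotomicExtension {p} ℚ K]
    {ζ : 𝓞 K} (hζ : IsPrimitiveRoot ζ p) (u : (𝓞 K)ˣ) :
    ∃ (x : (𝓞 K)ˣ) (n : ℤ),
      (∀ σ : K ≃ₐ[ℚ] K, σ (algebraMap (𝓞 K) K ζ) = (algebraMap (𝓞 K) K ζ)⁻¹ →
        σ (algebraMap (𝓞 K) K x) = algebraMap (𝓞 K) K x) ∧
      u = x * (hζ.isUnit hp.out.ne_zero).unit ^ n := by
  have : NumberField K := IsCyclotomicExtension.numberField {p} ℚ K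
  have hp2 : 2 < p := hp.out.two_le.lt_of_ne' hodd
  have : IsCMField K := IsCyclotomicExtension.Rat.isCMField K ⟨p, Set.mem_singleton p, hp2⟩
  set η := (hζ.isUnit hp.out.ne_zero).unit
  obtain ⟨k, hk⟩ := hζ.exists_mul_inv_unitsComplexConj_eq_zpow hp2 u
  have hx := (unitsComplexConj K).toMonoidHom.map_mul_zpow_neg_eq_self
    (hζ.unitsComplexConj_unit hp.out.ne_zero) hk
  refine ⟨u * η ^ (-k), k, fun σ hσ ↦ ?_, by group⟩
  rw [hζ.algEquiv_eq_complexConj hσ]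
  exact congrArg (fun v : (𝓞 K)ˣ ↦ ((v : 𝓞 K) : K)) hx
end

section
/- Let p be a prime, k a natural number, K and L fields with L an algebra over K such that L is a {p^k}-cyclotomic extension of K, let ζ ∈ L be a primitive p^k-th root of unity, and assume the p^k-th cyclotomic polynomial is irreducible over K. Then the discriminant over K of the power basis 1, ζ, ζ², …, ζ^(φ(p^k)−1) of L equals (−1)^(φ(p^k)/2) · p^(p^(k−1)·((p−1)·k − 1)), where φ is Euler's totient function and the division by 2 and the subtractions are natural-number (truncated) operations. -/
open Polynomial

/-- If `p` is a prime and `L/K` is a `p ^ k`-th cyclotomic extension with `ζ` a primitive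
`p ^ k`-th root of unity and the `p ^ k`-th cyclotomic polynomial irreducible over `K`, then
the discriminant of the power basis `1, ζ, …, ζ ^ (φ(p ^ k) - 1)` is
`(-1) ^ (φ(p ^ k) / 2) * p ^ (p ^ (k - 1) * ((p - 1) * k - 1))`, where the division and
subtractions are truncated natural-number operations. -/
theorem discr_prime_pow {p : ℕ+} {k : ℕ} {K L : Type*} [Field K] [Field L] [Algebra K L]
    {ζ : L} [hcycl : IsCyclotomicExtension {(↑(p ^ k) : ℕ)} K L] [hp : Fact (p : ℕ).Prime]
    (hζ : IsPrimitiveRoot ζ ↑(p ^ k))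
    (hirr : Irreducible (cyclotomic (↑(p ^ k) : ℕ) K)) :
    Algebra.discr K (hζ.powerBasis K).basis =
      (-1) ^ ((p ^ k : ℕ).totient / 2) *
        (p : K) ^ ((p : ℕ) ^ (k - 1) * (((p : ℕ) - 1) * k - 1)) :=
  -- `↑(p ^ k)` unfolds to `↑p ^ k`, but instance search does not see through the coercion.
  IsCyclotomicExtension.discr_prime_pow (p := p) (hcycl := hcycl) hζ hirr
end
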